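/- Let f : ℝ^N → ℝ be a convex continuous function with at least one global minimizer, let λ > 0 and τ ∈ (0, 1). Then for any starting point x₀ ∈ ℝ^N, the damped proximal iteration x_{k+1} = τ x_k + (1 − τ) prox_{λf}(x_k) converges to a global minimizer of f (a stationary point of f). -/

import Mathlib

/-!
The proximal map of a convex function is firmly nonexpansive, and its fixed points are exactly
the minimizers of `f`. For a firmly nonexpansive `T` with a fixed point `w`, each damped step
decreases `‖x k - w‖²` by at least `(1 - τ²) ‖x k - T (x k)‖²`. Hence the iterates are bounded,
the residuals `x k - T (x k)` tend to zero, and any cluster point `z` is a fixed point; since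
`‖x k - z‖` is also nonincreasing, the whole sequence converges to `z`.
-/

open Filter Topology RealInnerProductSpace

lemma nonpos_of_forall_le_mul {a b : ℝ} (h : ∀ t ∈ Set.Ioc (0 : ℝ) 1, a ≤ t * b) : a ≤ 0 := by
  have hlim : Tendsto (fun t : ℝ => t * b) (𝓝[>] 0) (𝓝 0) :=
    ((continuous_id.mul continuous_const).tendsto' 0 0 (zero_mul b)).mono_left nhdsWithin_le_nhds
  refine ge_of_tendsto hlim ?_
  filter_upwards [Ioc_mem_nhdsGT zero_lt_one] with t ht using h t ht

lemma tendsto_of_antitone_dist_of_subseq {X : Type*} [PseudoMetricSpace X] {x : ℕ → X} {z : X}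
    {φ : ℕ → ℕ} (hanti : Antitone fun k => dist (x k) z) (hφ : StrictMono φ)
    (hsub : Tendsto (x ∘ φ) atTop (𝓝 z)) : Tendsto x atTop (𝓝 z) := by
  rw [tendsto_iff_dist_tendsto_zero] at hsub ⊢
  have hinf := tendsto_atTop_ciInf hanti ⟨0, by rintro _ ⟨k, rfl⟩; exact dist_nonneg⟩
  rwa [tendsto_nhds_unique (hinf.comp hφ.tendsto_atTop) hsub] at hinf

variable {E : Type*} [NormedAddCommGroup E] [InnerProductSpace ℝ E]

section Prox

def IsProxPoint (f : E → ℝ) (lam : ℝ) (y p : E) : Prop :=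
  IsMinOn (fun x => f x + (1 / (2 * lam)) * ‖x - y‖ ^ 2) Set.univ p

variable {f : E → ℝ} {lam : ℝ} {y y' p q w : E}

theorem IsProxPoint.inner_le (hf : ConvexOn ℝ Set.univ f) (hp : IsProxPoint f lam y p) (q : E) :
    lam⁻¹ * ⟪y - p, q - p⟫ ≤ f q - f p := by
  set c := 1 / (2 * lam)
  -- compare `p` with the points `p + t • (q - p)` of the segment towards `q`, and let `t → 0`
  suffices h : f p - f q + lam⁻¹ * ⟪y - p, q - p⟫ ≤ 0 by linarith
  refine nonpos_of_forall_le_mul (b := c * ‖q - p‖ ^ 2) fun t ⟨ht0, ht1⟩ => ?_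
  have hmin := isMinOn_iff.mp hp ((1 - t) • p + t • q) (Set.mem_univ _)
  have hconv : f ((1 - t) • p + t • q) ≤ (1 - t) * f p + t * f q :=
    hf.2 (Set.mem_univ p) (Set.mem_univ q) (by linarith) ht0.le (by ring)
  have hsq : ‖((1 - t) • p + t • q) - y‖ ^ 2
      = ‖p - y‖ ^ 2 - 2 * t * ⟪y - p, q - p⟫ + t ^ 2 * ‖q - p‖ ^ 2 := by
    rw [show ((1 - t) • p + t • q) - y = (p - y) + t • (q - p) by module, norm_add_sq_real,
      real_inner_smul_right, norm_smul, mul_pow, Real.norm_eq_abs, sq_abs,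
      ← neg_sub y p, inner_neg_left]
    ring
  have hc : lam⁻¹ = 2 * c := by simp only [c]; field_simp
  simp only [hsq] at hmin
  rw [hc]
  nlinarith

theorem IsProxPoint.norm_sub_sq_le_inner (hf : ConvexOn ℝ Set.univ f) (hlam : 0 < lam)
    (hp : IsProxPoint f lam y p) (hq : IsProxPoint f lam y' q) :
    ‖p - q‖ ^ 2 ≤ ⟪y - y', p - q⟫ := by
  have hsum : lam⁻¹ * (⟪y - p, q - p⟫ + ⟪y' - q, p - q⟫) ≤ 0 := by
    linarith [hp.inner_le hf q, hq.inner_le hf p]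
  have hexpand : ⟪y - p, q - p⟫ + ⟪y' - q, p - q⟫ = ‖p - q‖ ^ 2 - ⟪y - y', p - q⟫ := by
    rw [← neg_sub p q, inner_neg_right, neg_add_eq_sub, ← inner_sub_left,
      show y' - q - (y - p) = (p - q) - (y - y') by abel, inner_sub_left,
      real_inner_self_eq_norm_sq]
  rw [hexpand] at hsum
  nlinarith [inv_pos.mpr hlam]

theorem IsProxPoint.eq_of_isMinOn (hf : ConvexOn ℝ Set.univ f) (hlam : 0 < lam)
    (hp : IsProxPoint f lam w p) (hw : IsMinOn f Set.univ w) : p = w := by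
  have h := hp.inner_le hf w
  rw [real_inner_self_eq_norm_sq] at h
  have hfw := isMinOn_iff.mp hw p (Set.mem_univ p)
  have hsq : ‖w - p‖ ^ 2 ≤ 0 := by nlinarith [inv_pos.mpr hlam]
  have hnorm : ‖w - p‖ = 0 := by nlinarith [norm_nonneg (w - p)]
  exact (norm_sub_eq_zero_iff.mp hnorm).symm

theorem IsProxPoint.isMinOn_of_self (hf : ConvexOn ℝ Set.univ f) (hw : IsProxPoint f lam w w) :
    IsMinOn f Set.univ w :=
  isMinOn_iff.mpr fun q _ => by simpa using hw.inner_le hf q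

end Prox

section FirmlyNonexpansive

def FirmlyNonexpansive (T : E → E) : Prop :=
  ∀ a b, ‖T a - T b‖ ^ 2 ≤ ⟪a - b, T a - T b⟫

variable {T : E → E} {w : E} {τ : ℝ} {x : ℕ → E}

theorem FirmlyNonexpansive.lipschitzWith_one (hT : FirmlyNonexpansive T) : LipschitzWith 1 T :=
  LipschitzWith.of_dist_le_mul fun a b => by
    rw [NNReal.coe_one, one_mul, dist_eq_norm, dist_eq_norm]
    have h := (hT a b).trans (real_inner_le_norm _ _)
    nlinarith [norm_nonneg (a - b), norm_nonneg (T a - T b)]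

theorem FirmlyNonexpansive.id_sub (hT : FirmlyNonexpansive T) :
    FirmlyNonexpansive fun x => x - T x := fun a b => by
  have h := hT a b
  rw [show a - T a - (b - T b) = (a - b) - (T a - T b) by abel, norm_sub_sq_real,
    inner_sub_right (y := a - b), real_inner_self_eq_norm_sq]
  linarith

theorem FirmlyNonexpansive.norm_sub_sq_add_le (hT : FirmlyNonexpansive T) (hw : T w = w)
    (hτ : τ ≤ 1) (y : E) :
    ‖τ • y + (1 - τ) • T y - w‖ ^ 2 + (1 - τ ^ 2) * ‖y - T y‖ ^ 2 ≤ ‖y - w‖ ^ 2 := by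
  have hres : ‖y - T y‖ ^ 2 ≤ ⟪y - w, y - T y⟫ := by
    simpa [hw] using hT.id_sub y w
  rw [show τ • y + (1 - τ) • T y - w = (y - w) - (1 - τ) • (y - T y) by module, norm_sub_sq_real,
    real_inner_smul_right, norm_smul, mul_pow, Real.norm_eq_abs, sq_abs]
  nlinarith

theorem FirmlyNonexpansive.antitone_norm_sub_of_damped (hT : FirmlyNonexpansive T) (hw : T w = w)
    (hτ : τ ∈ Set.Icc (-1 : ℝ) 1) (hx : ∀ k, x (k + 1) = τ • x k + (1 - τ) • T (x k)) :
    Antitone fun k => ‖x k - w‖ := by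
  refine antitone_nat_of_succ_le fun k => ?_
  have h := hT.norm_sub_sq_add_le hw hτ.2 (x k)
  rw [← hx k] at h
  have hτsq : 0 ≤ 1 - τ ^ 2 := by nlinarith [hτ.1, hτ.2]
  exact (pow_le_pow_iff_left₀ (norm_nonneg _) (norm_nonneg _) two_ne_zero).mp
    (by nlinarith [sq_nonneg ‖x k - T (x k)‖])

theorem FirmlyNonexpansive.tendsto_sub_apply_of_damped (hT : FirmlyNonexpansive T) (hw : T w = w)
    (hτ : τ ∈ Set.Ioo (-1 : ℝ) 1) (hx : ∀ k, x (k + 1) = τ • x k + (1 - τ) • T (x k)) :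
    Tendsto (fun k => x k - T (x k)) atTop (𝓝 0) := by
  have hτsq : 0 < 1 - τ ^ 2 := by nlinarith [hτ.1, hτ.2]
  set g := fun k => ‖x k - w‖ ^ 2
  have hstep (k : ℕ) : (1 - τ ^ 2) * ‖x k - T (x k)‖ ^ 2 ≤ g k - g (k + 1) := by
    have h := hT.norm_sub_sq_add_le hw hτ.2.le (x k)
    rw [← hx k] at h
    simp only [g]
    linarith
  have hsum : Summable fun k => (1 - τ ^ 2) * ‖x k - T (x k)‖ ^ 2 :=
    summable_of_sum_range_le (fun k => by positivity) fun n =>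
      ((Finset.sum_le_sum fun k _ => hstep k).trans_eq (Finset.sum_range_sub' g n)).trans
        (sub_le_self _ (sq_nonneg _))
  have hsq : Tendsto (fun k => ‖x k - T (x k)‖ ^ 2) atTop (𝓝 0) := by
    have h := hsum.tendsto_atTop_zero.const_mul (1 - τ ^ 2)⁻¹
    rw [mul_zero] at h
    exact h.congr fun k => inv_mul_cancel_left₀ hτsq.ne' _
  rw [tendsto_zero_iff_norm_tendsto_zero]
  simpa using hsq.sqrt

theorem FirmlyNonexpansive.exists_tendsto_of_damped [ProperSpace E] (hT : FirmlyNonexpansive T)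
    (hfix : ∃ w, T w = w) (hτ : τ ∈ Set.Ioo (-1 : ℝ) 1)
    (hx : ∀ k, x (k + 1) = τ • x k + (1 - τ) • T (x k)) :
    ∃ z, T z = z ∧ Tendsto x atTop (𝓝 z) := by
  obtain ⟨w, hw⟩ := hfix
  have hbdd (k : ℕ) : x k ∈ Metric.closedBall w ‖x 0 - w‖ := by
    rw [Metric.mem_closedBall, dist_eq_norm]
    exact hT.antitone_norm_sub_of_damped hw (Set.Ioo_subset_Icc_self hτ) hx (Nat.zero_le k)
  obtain ⟨z, -, φ, hφ, hsub⟩ := tendsto_subseq_of_bounded Metric.isBounded_closedBall hbdd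
  have hz : T z = z := by
    have hlim := hsub.sub ((hT.lipschitzWith_one.continuous.tendsto z).comp hsub)
    have hres := (hT.tendsto_sub_apply_of_damped hw hτ hx).comp hφ.tendsto_atTop
    exact (sub_eq_zero.mp (tendsto_nhds_unique hlim hres)).symm
  refine ⟨z, hz, tendsto_of_antitone_dist_of_subseq ?_ hφ hsub⟩
  simpa only [dist_eq_norm] using
    hT.antitone_norm_sub_of_damped hz (Set.Ioo_subset_Icc_self hτ) hx

end FirmlyNonexpansive

theorem damped_prox_iteration_converges_general (N : ℕ) (f : EuclideanSpace ℝ (Fin N) → ℝ)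
    (hconv : ConvexOn ℝ Set.univ f)
    (hmin : ∃ xstar, IsMinOn f Set.univ xstar)
    (lam : ℝ) (hlam : 0 < lam) (τ : ℝ) (hτ : τ ∈ Set.Ioo (0 : ℝ) 1)
    (prox : EuclideanSpace ℝ (Fin N) → EuclideanSpace ℝ (Fin N))
    (hprox : ∀ y, IsMinOn (fun x => f x + (1 / (2 * lam)) * ‖x - y‖ ^ 2) Set.univ (prox y))
    (x : ℕ → EuclideanSpace ℝ (Fin N))
    (hiter : ∀ k, x (k + 1) = τ • x k + (1 - τ) • prox (x k)) :
    ∃ xlim, IsMinOn f Set.univ xlim ∧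
      Filter.Tendsto x Filter.atTop (nhds xlim) := by
  have hprox' : ∀ y, IsProxPoint f lam y (prox y) := hprox
  have hfirm : FirmlyNonexpansive prox := fun a b =>
    (hprox' a).norm_sub_sq_le_inner hconv hlam (hprox' b)
  obtain ⟨xstar, hxstar⟩ := hmin
  have hfix : prox xstar = xstar := (hprox' xstar).eq_of_isMinOn hconv hlam hxstar
  obtain ⟨z, hz, hlim⟩ := hfirm.exists_tendsto_of_damped ⟨xstar, hfix⟩
    ⟨by linarith [hτ.1], hτ.2⟩ hiter
  have hzprox : IsProxPoint f lam z z := by simpa only [hz] using hprox' z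
  exact ⟨z, hzprox.isMinOn_of_self hconv, hlim⟩

/-- For a convex continuous `f` with at least one global minimizer, the damped
proximal iteration `x_{k+1} = τ x_k + (1 - τ) prox_{λf}(x_k)` converges to a
global minimizer of `f` from any starting point. -/
theorem damped_prox_iteration_converges (N : ℕ) (f : EuclideanSpace ℝ (Fin N) → ℝ)
    (hconv : ConvexOn ℝ Set.univ f) (hcont : Continuous f)
    (hmin : ∃ xstar, IsMinOn f Set.univ xstar)
    (lam : ℝ) (hlam : 0 < lam) (τ : ℝ) (hτ : τ ∈ Set.Ioo (0 : ℝ) 1)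
    (prox : EuclideanSpace ℝ (Fin N) → EuclideanSpace ℝ (Fin N))
    (hprox : ∀ y, IsMinOn (fun x => f x + (1 / (2 * lam)) * ‖x - y‖ ^ 2) Set.univ (prox y))
    (x : ℕ → EuclideanSpace ℝ (Fin N))
    (hiter : ∀ k, x (k + 1) = τ • x k + (1 - τ) • prox (x k)) :
    ∃ xlim, IsMinOn f Set.univ xlim ∧
      Filter.Tendsto x Filter.atTop (nhds xlim) :=
  damped_prox_iteration_converges_general N f hconv hmin lam hlam τ hτ prox hprox x hiter
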